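/- Define rationals c_n by c_0 = 1 and the recursion c_n = ∑_{i=0}^{n-1} (-1)^{n-1+i} c_i · ∏_{j=1}^{n-i} 1/(1-q^j)^2 (in the field ℚ(q) or ℚ[[q]]). Then c_n = W_n(q) / ∏_{k=1}^{n} (1-q^k)^2, where W_n(q) = ∑ q^{inv(σ)+inv(τ)} over pairs of permutations of {1,...,n} with no common ascent. -/

import Mathlib

open Finset

/-- A common ascent of a pair of permutations of `{1,...,n}`:
an index `i` with `i+1 = j ≤ n` such that both permutations increase from `i` to `j`. -/
def CommonAscent {n : ℕ} (σ τ : Equiv.Perm (Fin n)) : Prop :=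
  ∃ i j : Fin n, (i : ℕ) + 1 = (j : ℕ) ∧ σ i < σ j ∧ τ i < τ j

instance {n : ℕ} : DecidablePred
    (fun p : Equiv.Perm (Fin n) × Equiv.Perm (Fin n) => CommonAscent p.1 p.2) := fun _ => by
  unfold CommonAscent; infer_instance

/-- The number of inversions of a permutation. -/
def inversions {n : ℕ} (σ : Equiv.Perm (Fin n)) : ℕ :=
  (Finset.univ.filter (fun p : Fin n × Fin n => p.1 < p.2 ∧ σ p.2 < σ p.1)).card

/-- `W n = ∑ q^(inv σ + inv τ)` over pairs of permutations with no common ascent,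
as a polynomial in `q`. -/
noncomputable def W (n : ℕ) : Polynomial ℚ :=
  ∑ p ∈ Finset.univ.filter
      (fun p : Equiv.Perm (Fin n) × Equiv.Perm (Fin n) => ¬ CommonAscent p.1 p.2),
    Polynomial.X ^ (inversions p.1 + inversions p.2)

/-!
Clearing denominators, the theorem says that `W` satisfies
`∑_{i=0}^n (-1)^i [n choose i]_q^2 W_i = 0` for `n ≥ 1`.

Call `i` admissible for a pair `(σ, τ)` of permutations of `{0, …, n-1}` if every position
`p ≥ i` is a common ascent and no position `p < i - 1` is. Such a pair is determined by the
value sets `σ '' [0, i)`, `τ '' [0, i)` together with the standardizations of `σ` and `τ` on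
`[0, i)`, which have no common ascent; the inversions split accordingly, so the pairs for which
`i` is admissible have generating function `[n choose i]_q^2 W_i`. For a fixed pair the
admissible `i ≤ n` are either none or exactly `t` and `t + 1`, where `[t, n - 1)` is the longest
tail of common ascents, so the alternating sum cancels pair by pair.
-/

open Polynomial Equiv

section QBinomial

variable {α : Type*} [LinearOrder α] {R : Type*} [CommRing R]

def crossInversions (S U : Finset α) : ℕ := #{x ∈ S ×ˢ U | x.2 < x.1}

lemma crossInversions_insert_right_of_lt {S U : Finset α} {a : α} (ha : ∀ x ∈ S, x < a) :
    crossInversions S (insert a U) = crossInversions S U := by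
  unfold crossInversions
  congr 1
  ext ⟨x, y⟩
  simp only [mem_filter, mem_product, mem_insert]
  constructor
  · rintro ⟨⟨hx, rfl | hy⟩, hlt⟩
    · exact absurd (ha x hx) (not_lt.2 hlt.le)
    · exact ⟨⟨hx, hy⟩, hlt⟩
  · rintro ⟨⟨hx, hy⟩, hlt⟩
    exact ⟨⟨hx, Or.inr hy⟩, hlt⟩

lemma crossInversions_insert_left_of_lt {S U : Finset α} {a : α} (haS : a ∉ S)
    (ha : ∀ y ∈ U, y < a) :
    crossInversions (insert a S) U = #U + crossInversions S U := by
  unfold crossInversions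
  rw [insert_eq, union_product, filter_union, card_union_of_disjoint, singleton_product,
    filter_map, card_map, filter_true_of_mem (fun y hy => by simpa using ha y hy)]
  refine disjoint_left.2 fun x hx hx' => ?_
  simp only [mem_filter, mem_product, mem_singleton] at hx hx'
  exact haS (hx.1.1 ▸ hx'.1.1)

/-- The Gaussian binomial `[#s choose k]_q`, as the inversion generating function of the
`k`-subsets of `s`. -/
noncomputable def qBinomial (R : Type*) [CommRing R] (s : Finset α) (k : ℕ) : R[X] :=
  ∑ T ∈ s.powersetCard k, X ^ crossInversions T (s \ T)

lemma qBinomial_zero (s : Finset α) : qBinomial R s 0 = 1 := by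
  simp [qBinomial, crossInversions]

lemma qBinomial_card (s : Finset α) : qBinomial R s #s = 1 := by
  simp [qBinomial, powersetCard_self, crossInversions]

lemma qBinomial_of_card_lt {s : Finset α} {k : ℕ} (h : #s < k) : qBinomial R s k = 0 := by
  rw [qBinomial, powersetCard_eq_empty.2 h, sum_empty]

lemma qBinomial_insert_succ {s : Finset α} {a : α} (ha : ∀ x ∈ s, x < a) (k : ℕ) :
    qBinomial R (insert a s) (k + 1) = qBinomial R s (k + 1) + X ^ (#s - k) * qBinomial R s k := by
  have has : a ∉ s := fun h => (ha a h).false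
  have hnot : ∀ T ∈ s.powersetCard k, a ∉ T := fun T hT h => has ((mem_powersetCard.1 hT).1 h)
  rw [qBinomial, powersetCard_succ_insert has, sum_union, sum_image, qBinomial, qBinomial, mul_sum]
  · congr 1
    · refine sum_congr rfl fun T hT => ?_
      have hTs := (mem_powersetCard.1 hT).1
      rw [insert_sdiff_of_notMem _ fun h => has (hTs h),
        crossInversions_insert_right_of_lt fun x hx => ha x (hTs hx)]
    · refine sum_congr rfl fun T hT => ?_
      obtain ⟨hTs, hTk⟩ := mem_powersetCard.1 hT
      rw [insert_sdiff_insert, sdiff_insert_of_notMem has, ← pow_add,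
        crossInversions_insert_left_of_lt (hnot T hT) fun y hy => ha y (mem_sdiff.1 hy).1,
        card_sdiff_of_subset hTs, hTk]
  · exact fun T hT U hU h => by
      rw [← erase_insert (hnot T hT), h, erase_insert (hnot U hU)]
  · refine disjoint_left.2 fun T hT hT' => ?_
    obtain ⟨U, -, rfl⟩ := mem_image.1 hT'
    exact has ((mem_powersetCard.1 hT).1 (mem_insert_self a U))

noncomputable def qPochhammer (R : Type*) [CommRing R] (m : ℕ) : R[X] :=
  ∏ k ∈ range m, (1 - X ^ (k + 1))

@[simp]
lemma qPochhammer_zero : qPochhammer R 0 = 1 := prod_range_zero _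

lemma qPochhammer_succ (m : ℕ) : qPochhammer R (m + 1) = qPochhammer R m * (1 - X ^ (m + 1)) :=
  prod_range_succ _ m

lemma qPochhammer_ne_zero [IsDomain R] (m : ℕ) : qPochhammer R m ≠ 0 :=
  prod_ne_zero_iff.2 fun k _ h => by simpa using congrArg (coeff · 0) h

theorem qBinomial_mul_qPochhammer (s : Finset α) {k : ℕ} (hk : k ≤ #s) :
    qBinomial R s k * qPochhammer R k * qPochhammer R (#s - k) = qPochhammer R #s := by
  induction s using Finset.induction_on_max generalizing k with
  | empty => simp_all [qBinomial_zero]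
  | insert a s ha ih =>
    rw [card_insert_of_notMem fun h => (ha a h).false] at hk ⊢
    obtain _ | k := k
    · simp [qBinomial_zero]
    rw [qBinomial_insert_succ ha, Nat.add_sub_add_right]
    obtain ⟨r, hr⟩ | rfl : (∃ r, #s = k + 1 + r) ∨ k = #s := by
      rcases hk.lt_or_eq with h | h
      · exact Or.inl ⟨#s - (k + 1), by omega⟩
      · exact Or.inr (by omega)
    · have ih₁ := ih (k := k + 1) (by omega)
      have ih₀ := ih (k := k) (by omega)
      rw [hr, Nat.add_sub_cancel_left, qPochhammer_succ k] at ih₁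
      rw [hr, show k + 1 + r - k = r + 1 by omega, qPochhammer_succ r] at ih₀
      rw [hr, show k + 1 + r - k = r + 1 by omega, qPochhammer_succ r, qPochhammer_succ k,
        qPochhammer_succ (k + 1 + r)]
      linear_combination (1 - X ^ (r + 1)) * ih₁ + X ^ (r + 1) * (1 - X ^ (k + 1)) * ih₀
    · rw [qBinomial_of_card_lt (Nat.lt_succ_self _), Nat.sub_self, qBinomial_card]
      simp

end QBinomial

lemma Fin.strictMonoOn_of_lt_of_val_add_one {α : Type*} [Preorder α] {n i : ℕ} {f : Fin n → α}
    (h : ∀ a b : Fin n, i ≤ (a : ℕ) → (a : ℕ) + 1 = b → f a < f b) :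
    StrictMonoOn f {p | i ≤ (p : ℕ)} :=
  strictMonoOn_of_lt_succ ⟨fun _ ha _ _ _ hx => le_trans ha (Fin.le_def.1 hx.1)⟩
    fun _ ha hia _ => h _ _ hia <|
      Nat.covBy_iff_add_one_eq.1 (Fin.covBy_iff.1 (Order.covBy_succ_of_not_isMax ha))

lemma Equiv.Perm.eq_of_lt_iff_lt {α : Type*} [LinearOrder α] [Finite α] {σ τ : Perm α}
    (h : ∀ p q, σ p < σ q ↔ τ p < τ q) : σ = τ := by
  have hmono : StrictMono (σ ∘ τ.symm) := fun x y hxy => by simpa [h] using hxy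
  have hid : σ ∘ τ.symm = id := (hmono.range_inj strictMono_id).1 <| by
    rw [(σ.surjective.comp τ.symm.surjective).range_eq, Set.range_id]
  exact Equiv.ext fun p => by simpa using congrFun hid (τ p)

section CommonAscents

variable {n : ℕ}

def CommonAscentAt (σ τ : Perm (Fin n)) (p : ℕ) : Prop :=
  ∃ h : p + 1 < n, σ ⟨p, by omega⟩ < σ ⟨p + 1, h⟩ ∧ τ ⟨p, by omega⟩ < τ ⟨p + 1, h⟩

lemma commonAscent_iff_exists_commonAscentAt (σ τ : Perm (Fin n)) :
    CommonAscent σ τ ↔ ∃ p, CommonAscentAt σ τ p := by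
  constructor
  · rintro ⟨a, ⟨_, hb⟩, rfl, hσ, hτ⟩
    exact ⟨a, hb, hσ, hτ⟩
  · rintro ⟨p, h, hσ, hτ⟩
    exact ⟨_, _, rfl, hσ, hτ⟩

lemma commonAscentAt_iff_of_lt_iff_lt {i : ℕ} (hi : i ≤ n) {σ τ : Perm (Fin n)}
    {σ' τ' : Perm (Fin i)}
    (hσ : ∀ p q : Fin i, σ (Fin.castLE hi p) < σ (Fin.castLE hi q) ↔ σ' p < σ' q)
    (hτ : ∀ p q : Fin i, τ (Fin.castLE hi p) < τ (Fin.castLE hi q) ↔ τ' p < τ' q)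
    {p : ℕ} (hp : p + 2 ≤ i) : CommonAscentAt σ τ p ↔ CommonAscentAt σ' τ' p := by
  have hσ' := hσ ⟨p, by omega⟩ ⟨p + 1, by omega⟩
  have hτ' := hτ ⟨p, by omega⟩ ⟨p + 1, by omega⟩
  exact ⟨fun ⟨_, h⟩ => ⟨by omega, hσ'.1 h.1, hτ'.1 h.2⟩,
    fun ⟨_, h⟩ => ⟨by omega, hσ'.2 h.1, hτ'.2 h.2⟩⟩

/-- `i` is admissible for `(σ, τ)`: the position `i - 1` is left free. -/
def IsCommonAscentTail (i : ℕ) (σ τ : Perm (Fin n)) : Prop :=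
  (∀ p, i ≤ p → p + 1 < n → CommonAscentAt σ τ p) ∧ ∀ p, p + 2 ≤ i → ¬ CommonAscentAt σ τ p

lemma strictMonoOn_of_isCommonAscentTail {i : ℕ} {σ τ : Perm (Fin n)}
    (h : IsCommonAscentTail i σ τ) :
    StrictMonoOn σ {p | i ≤ (p : ℕ)} ∧ StrictMonoOn τ {p | i ≤ (p : ℕ)} := by
  constructor <;> refine Fin.strictMonoOn_of_lt_of_val_add_one ?_ <;> rintro a ⟨_, hb⟩ ha rfl
  exacts [(h.1 a ha hb).2.1, (h.1 a ha hb).2.2]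

lemma isCommonAscentTail_iff {σ τ : Perm (Fin n)} {t : ℕ} (htn : t < n)
    (ht : ∀ p, t ≤ p → p + 1 < n → CommonAscentAt σ τ p)
    (ht_min : ∀ p, p + 1 = t → ¬ CommonAscentAt σ τ p) {i : ℕ} (hi : i ≤ n) :
    IsCommonAscentTail i σ τ ↔ (i = t ∨ i = t + 1) ∧ IsCommonAscentTail t σ τ := by
  constructor
  · rintro ⟨htail, hhead⟩
    have hti : t ≤ i := by
      by_contra h
      exact ht_min (t - 1) (by omega) (htail (t - 1) (by omega) (by omega))
    have hit : i ≤ t + 1 := by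
      by_contra h
      exact hhead t (by omega) (ht t le_rfl (by omega))
    exact ⟨by omega, ht, fun p hp => hhead p (by omega)⟩
  · rintro ⟨rfl | rfl, hhead⟩
    · exact hhead
    · refine ⟨fun p hp => ht p (by omega), fun p hp => ?_⟩
      rcases (Nat.le_of_lt_succ hp).lt_or_eq with hp | hp
      · exact hhead.2 p hp
      · exact ht_min p (by omega)

open Classical in
lemma sum_neg_one_pow_filter_isCommonAscentTail (R : Type*) [Ring R] (hn : 1 ≤ n)
    (σ τ : Perm (Fin n)) :
    ∑ i ∈ range (n + 1) with IsCommonAscentTail i σ τ, (-1 : R) ^ i = 0 := by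
  have hex : ∃ t, ∀ p, t ≤ p → p + 1 < n → CommonAscentAt σ τ p :=
    ⟨n - 1, fun p hp hpn => absurd hpn (by omega)⟩
  have htn : Nat.find hex < n :=
    lt_of_le_of_lt (Nat.find_min' hex (m := n - 1) fun p hp hpn => absurd hpn (by omega)) (by omega)
  have ht_min : ∀ p, p + 1 = Nat.find hex → ¬ CommonAscentAt σ τ p := fun p hp hca =>
    Nat.find_min hex (m := p) (by omega) fun q hq hqn =>
      hq.lt_or_eq.elim (fun hq => Nat.find_spec hex q (by omega) hqn) (· ▸ hca)
  have key := fun i (hi : i ≤ n) => isCommonAscentTail_iff htn (Nat.find_spec hex) ht_min hi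
  by_cases hB : IsCommonAscentTail (Nat.find hex) σ τ
  · have : {i ∈ range (n + 1) | IsCommonAscentTail i σ τ} = {Nat.find hex, Nat.find hex + 1} := by
      ext i
      simp only [mem_filter, mem_range, mem_insert, mem_singleton]
      exact ⟨fun ⟨hi, h⟩ => ((key i (by omega)).1 h).1,
        fun h => ⟨by omega, (key i (by omega)).2 ⟨h, hB⟩⟩⟩
    rw [this, sum_pair (by omega), pow_succ, mul_neg_one, add_neg_cancel]
  · refine sum_eq_zero fun i hi => absurd ?_ hB
    obtain ⟨hi, h⟩ := mem_filter.1 hi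
    exact ((key i (Nat.lt_succ_iff.1 (mem_range.1 hi))).1 h).2

end CommonAscents

section Standardize

variable {n i : ℕ}

def prefixValues (i : ℕ) (σ : Perm (Fin n)) : Finset (Fin n) := {a | (σ.symm a : ℕ) < i}

@[simp]
lemma mem_prefixValues {σ : Perm (Fin n)} {a : Fin n} :
    a ∈ prefixValues i σ ↔ (σ.symm a : ℕ) < i := by
  simp [prefixValues]

lemma card_prefixValues (hi : i ≤ n) (σ : Perm (Fin n)) : #(prefixValues i σ) = i := by
  rw [card_equiv σ.symm (t := {p : Fin n | (p : ℕ) < i}) (by simp), Fin.card_filter_val_lt,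
    min_eq_right hi]

noncomputable def standardize (hi : i ≤ n) (σ : Perm (Fin n)) : Perm (Fin i) :=
  ((Fin.castLEOrderIso hi).toEquiv.trans (σ.subtypeEquiv fun p => by simp)).trans
    ((prefixValues i σ).orderIsoOfFin (card_prefixValues hi σ)).symm.toEquiv

lemma orderIsoOfFin_standardize (hi : i ≤ n) (σ : Perm (Fin n)) (p : Fin i) :
    ((prefixValues i σ).orderIsoOfFin (card_prefixValues hi σ) (standardize hi σ p) : Fin n) =
      σ (Fin.castLE hi p) := by
  simp [standardize]

lemma standardize_lt_standardize_iff (hi : i ≤ n) (σ : Perm (Fin n)) (p q : Fin i) :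
    standardize hi σ p < standardize hi σ q ↔ σ (Fin.castLE hi p) < σ (Fin.castLE hi q) := by
  rw [← orderIsoOfFin_standardize hi σ p, ← orderIsoOfFin_standardize hi σ q, Subtype.coe_lt_coe,
    OrderIso.lt_iff_lt]

lemma inversions_eq_crossInversions_add (hi : i ≤ n) {σ : Perm (Fin n)}
    (hσ : StrictMonoOn σ {p | i ≤ (p : ℕ)}) :
    inversions σ = crossInversions (prefixValues i σ) (univ \ prefixValues i σ) +
      inversions (standardize hi σ) := by
  rw [inversions, ← card_filter_add_card_filter_not (p := fun x : Fin n × Fin n => (x.2 : ℕ) < i),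
    add_comm]
  congr 1
  · refine card_nbij' (fun x => (σ x.1, σ x.2)) (fun y => (σ.symm y.1, σ.symm y.2)) ?_ ?_
      (fun x _ => by simp) (fun y _ => by simp)
    · rintro ⟨p, q⟩ h
      simp only [coe_filter, mem_filter, mem_univ, true_and, not_lt, Set.mem_ofPred_eq] at h
      obtain ⟨⟨hpq, hinv⟩, hq⟩ := h
      have hp : (p : ℕ) < i := by
        by_contra hp
        exact (hσ (not_lt.1 hp) hq hpq).asymm hinv
      simp_all
    · rintro ⟨a, b⟩ h
      simp only [coe_filter, mem_product, mem_univ, mem_sdiff, mem_prefixValues, true_and,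
        Set.mem_ofPred_eq, mem_filter] at h ⊢
      refine ⟨⟨?_, by simpa using h.2⟩, by omega⟩
      rw [Fin.lt_def]
      omega
  · refine card_bij' (fun x hx => (⟨x.1, ?_⟩, ⟨x.2, ?_⟩))
      (fun y _ => (Fin.castLE hi y.1, Fin.castLE hi y.2)) ?_ ?_ (fun _ _ => rfl) (fun _ _ => rfl)
    · simp only [mem_filter, mem_univ, true_and] at hx
      exact lt_trans hx.1.1 hx.2
    · exact (mem_filter.1 hx).2
    · intro x hx
      simp only [mem_filter, mem_univ, true_and] at hx ⊢
      exact ⟨hx.1.1, (standardize_lt_standardize_iff hi σ _ _).2 hx.1.2⟩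
    · intro y hy
      simp only [mem_filter, mem_univ, true_and] at hy ⊢
      exact ⟨⟨hy.1, (standardize_lt_standardize_iff hi σ _ _).1 hy.2⟩, by simp⟩

lemma not_commonAscent_standardize (hi : i ≤ n) {σ τ : Perm (Fin n)}
    (h : IsCommonAscentTail i σ τ) : ¬ CommonAscent (standardize hi σ) (standardize hi τ) := by
  rw [commonAscent_iff_exists_commonAscentAt]
  rintro ⟨p, hca⟩
  have hp : p + 2 ≤ i := by obtain ⟨_, _⟩ := hca; omega
  exact h.2 p hp <| (commonAscentAt_iff_of_lt_iff_lt hi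
    (fun p q => (standardize_lt_standardize_iff hi σ p q).symm)
    (fun p q => (standardize_lt_standardize_iff hi τ p q).symm) hp).2 hca

end Standardize

section Glue

variable {n i : ℕ}

lemma card_subtype_not_val_lt (hi : i ≤ n) : Fintype.card {p : Fin n // ¬ (p : ℕ) < i} = n - i := by
  rw [Fintype.card_subtype_compl, Fintype.card_congr (Fin.castLEOrderIso hi).toEquiv.symm,
    Fintype.card_fin, Fintype.card_fin]

lemma card_subtype_notMem {T : Finset (Fin n)} (hT : #T = i) :
    Fintype.card {a : Fin n // a ∉ T} = n - i := by
  rw [Fintype.card_subtype_compl, Fintype.card_coe, hT, Fintype.card_fin]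

noncomputable def tailOrderIso (hi : i ≤ n) {T : Finset (Fin n)} (hT : #T = i) :
    {p : Fin n // ¬ (p : ℕ) < i} ≃o {a : Fin n // a ∉ T} :=
  (Fintype.orderIsoFinOfCardEq _ (card_subtype_not_val_lt hi)).symm.trans
    (Fintype.orderIsoFinOfCardEq _ (card_subtype_notMem hT))

/-- Inverse to `σ ↦ (prefixValues i σ, standardize hi σ)` on the permutations that increase
from position `i` on. -/
noncomputable def glue (hi : i ≤ n) {T : Finset (Fin n)} (hT : #T = i) (σ' : Perm (Fin i)) :
    Perm (Fin n) :=
  Equiv.subtypeCongr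
    (((Fin.castLEOrderIso hi).symm.toEquiv.trans σ').trans (T.orderIsoOfFin hT).toEquiv)
    (tailOrderIso hi hT).toEquiv

variable (hi : i ≤ n) {T : Finset (Fin n)} (hT : #T = i) (σ' : Perm (Fin i))

lemma glue_apply_of_lt {p : Fin n} (hp : (p : ℕ) < i) :
    glue hi hT σ' p = T.orderIsoOfFin hT (σ' ⟨p, hp⟩) := by
  simp only [glue, subtypeCongr, sumCompl, symm_mk, OrderIso.toEquiv_symm, trans_apply, coe_fn_mk,
    hp, ↓reduceDIte, sumCongr_apply, coe_trans, RelIso.coe_fn_toEquiv, OrderIso.coe_symm_toEquiv,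
    Sum.map_inl, Function.comp_apply, Sum.elim_inl, coe_orderIsoOfFin_apply,
    EmbeddingLike.apply_eq_iff_eq]
  rfl

lemma glue_apply_of_not_lt {p : Fin n} (hp : ¬ (p : ℕ) < i) :
    glue hi hT σ' p = tailOrderIso hi hT ⟨p, hp⟩ := by
  simp [glue, Equiv.subtypeCongr, Equiv.sumCompl, hp]

lemma glue_lt_glue_iff (p q : Fin i) :
    glue hi hT σ' (Fin.castLE hi p) < glue hi hT σ' (Fin.castLE hi q) ↔ σ' p < σ' q := by
  rw [glue_apply_of_lt hi hT σ' (by simp), glue_apply_of_lt hi hT σ' (by simp), Subtype.coe_lt_coe,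
    OrderIso.lt_iff_lt]
  rfl

lemma strictMonoOn_glue : StrictMonoOn (glue hi hT σ') {p | i ≤ (p : ℕ)} := by
  intro p hp q hq hpq
  simp only [Set.mem_ofPred_eq] at hp hq
  rw [glue_apply_of_not_lt hi hT σ' (by omega), glue_apply_of_not_lt hi hT σ' (by omega),
    Subtype.coe_lt_coe, OrderIso.lt_iff_lt]
  exact hpq

lemma prefixValues_glue : prefixValues i (glue hi hT σ') = T := by
  refine eq_of_subset_of_card_le (fun a ha => ?_) (by rw [card_prefixValues hi, hT])
  rw [mem_prefixValues] at ha
  have := glue_apply_of_lt hi hT σ' ha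
  rw [apply_symm_apply] at this
  exact this ▸ (T.orderIsoOfFin hT _).2

lemma standardize_glue : standardize hi (glue hi hT σ') = σ' :=
  Equiv.Perm.eq_of_lt_iff_lt fun p q => by
    rw [standardize_lt_standardize_iff, glue_lt_glue_iff]

lemma glue_standardize {σ : Perm (Fin n)} (hσ : StrictMonoOn σ {p | i ≤ (p : ℕ)}) :
    glue hi (card_prefixValues hi σ) (standardize hi σ) = σ := by
  have htail : (fun p : {p : Fin n // ¬ (p : ℕ) < i} =>
      (tailOrderIso hi (card_prefixValues hi σ) p : Fin n)) = fun p => σ p.1 := by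
    refine ((Subtype.strictMono_coe _).comp (tailOrderIso hi _).strictMono |>.range_inj
      fun p q hpq => hσ (not_lt.1 p.2) (not_lt.1 q.2) hpq).1 ?_
    ext a
    simpa using ⟨fun h => ⟨_, h, σ.apply_symm_apply a⟩, by rintro ⟨b, hb, rfl⟩; simpa using hb⟩
  ext p
  by_cases hp : (p : ℕ) < i
  · rw [glue_apply_of_lt hi _ _ hp, orderIsoOfFin_standardize]
    rfl
  · rw [glue_apply_of_not_lt hi _ _ hp]
    exact congrArg Fin.val (congrFun htail ⟨p, hp⟩)

end Glue

lemma isCommonAscentTail_glue {n i : ℕ} (hi : i ≤ n) {T U : Finset (Fin n)} (hT : #T = i) (hU : #U = i)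
    {σ' τ' : Perm (Fin i)} (h : ¬ CommonAscent σ' τ') :
    IsCommonAscentTail i (glue hi hT σ') (glue hi hU τ') := by
  refine ⟨fun p hp hpn => ⟨hpn, strictMonoOn_glue hi hT σ' hp (show i ≤ p + 1 by omega) (Nat.lt_succ_self p),
    strictMonoOn_glue hi hU τ' hp (show i ≤ p + 1 by omega) (Nat.lt_succ_self p)⟩, fun p hp hca => h ?_⟩
  exact (commonAscent_iff_exists_commonAscentAt σ' τ').2 ⟨p, (commonAscentAt_iff_of_lt_iff_lt hi
    (glue_lt_glue_iff hi hT σ') (glue_lt_glue_iff hi hU τ') hp).1 hca⟩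

section GeneratingFunctions

variable {n i : ℕ}

lemma qBinomial_sq_mul_W :
    qBinomial ℚ (univ : Finset (Fin n)) i ^ 2 * W i =
      ∑ x ∈ (powersetCard i (univ : Finset (Fin n)) ×ˢ powersetCard i (univ : Finset (Fin n))) ×ˢ
          univ.filter (fun y : Perm (Fin i) × Perm (Fin i) => ¬ CommonAscent y.1 y.2),
        X ^ (crossInversions x.1.1 (univ \ x.1.1) + crossInversions x.1.2 (univ \ x.1.2) +
          (inversions x.2.1 + inversions x.2.2)) := by
  rw [sq, qBinomial, sum_mul_sum, ← sum_product', W, sum_mul_sum]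
  simp only [sum_product, pow_add]

open Classical in
noncomputable def commonAscentTailGF (n i : ℕ) : ℚ[X] :=
  ∑ x : Perm (Fin n) × Perm (Fin n) with IsCommonAscentTail i x.1 x.2,
    X ^ (inversions x.1 + inversions x.2)

theorem commonAscentTailGF_eq (hi : i ≤ n) :
    commonAscentTailGF n i = qBinomial ℚ (univ : Finset (Fin n)) i ^ 2 * W i := by
  rw [qBinomial_sq_mul_W, commonAscentTailGF]
  refine sum_bij'
    (fun x _ => ((prefixValues i x.1, prefixValues i x.2), (standardize hi x.1, standardize hi x.2)))
    (fun y hy => (glue hi (by simp at hy; exact hy.1.1) y.2.1,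
      glue hi (by simp at hy; exact hy.1.2) y.2.2))
    ?_ ?_ ?_ ?_ ?_
  · intro x hx
    simp only [mem_filter, mem_univ, true_and] at hx
    simp [card_prefixValues hi, not_commonAscent_standardize hi hx]
  · intro y hy
    simp only [mem_product, mem_powersetCard, mem_filter, mem_univ, true_and] at hy
    simpa using isCommonAscentTail_glue hi hy.1.1.2 hy.1.2.2 hy.2
  · intro x hx
    simp only [mem_filter, mem_univ, true_and] at hx
    obtain ⟨hσ, hτ⟩ := strictMonoOn_of_isCommonAscentTail hx
    exact Prod.ext (glue_standardize hi hσ) (glue_standardize hi hτ)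
  · intro y _
    simp [prefixValues_glue, standardize_glue]
  · intro x hx
    simp only [mem_filter, mem_univ, true_and] at hx
    obtain ⟨hσ, hτ⟩ := strictMonoOn_of_isCommonAscentTail hx
    rw [inversions_eq_crossInversions_add hi hσ, inversions_eq_crossInversions_add hi hτ]
    ring

open Classical in
theorem sum_neg_one_pow_mul_commonAscentTailGF (hn : 1 ≤ n) :
    ∑ i ∈ range (n + 1), (-1 : ℚ[X]) ^ i * commonAscentTailGF n i = 0 := by
  calc ∑ i ∈ range (n + 1), (-1) ^ i * commonAscentTailGF n i
      = ∑ x : Perm (Fin n) × Perm (Fin n), X ^ (inversions x.1 + inversions x.2) *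
          ∑ i ∈ range (n + 1) with IsCommonAscentTail i x.1 x.2, (-1) ^ i := by
        simp only [commonAscentTailGF, sum_filter, mul_sum, mul_ite, mul_zero]
        rw [sum_comm]
        simp only [mul_comm]
    _ = 0 := by simp [sum_neg_one_pow_filter_isCommonAscentTail _ hn]

theorem sum_neg_one_pow_mul_qBinomial_sq_mul_W (hn : 1 ≤ n) :
    ∑ i ∈ range (n + 1), (-1) ^ i * (qBinomial ℚ (univ : Finset (Fin n)) i ^ 2 * W i) = 0 := by
  rw [← sum_neg_one_pow_mul_commonAscentTailGF hn]
  exact sum_congr rfl fun i hi => by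
    rw [commonAscentTailGF_eq (Nat.lt_succ_iff.1 (mem_range.1 hi))]

lemma W_zero : W 0 = 1 := by
  simp [W, CommonAscent, inversions]

theorem W_eq_sum_qBinomial_sq_mul_W (hn : 1 ≤ n) :
    W n = ∑ i ∈ range n, (-1) ^ (n - 1 + i) * (qBinomial ℚ (univ : Finset (Fin n)) i ^ 2 * W i) := by
  obtain ⟨m, rfl⟩ : ∃ m, n = m + 1 := ⟨n - 1, by omega⟩
  have h := sum_neg_one_pow_mul_qBinomial_sq_mul_W hn
  have hG : qBinomial ℚ (univ : Finset (Fin (m + 1))) (m + 1) = 1 := by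
    simpa using qBinomial_card (R := ℚ) (univ : Finset (Fin (m + 1)))
  rw [sum_range_succ, hG] at h
  have hsign : ((-1 : ℚ[X]) ^ m) ^ 2 = 1 := by rw [← pow_mul, (Even.mul_left even_two m).neg_one_pow]
  rw [show ∀ f : ℕ → ℚ[X], ∑ i ∈ range (m + 1), (-1) ^ (m + 1 - 1 + i) * f i =
      (-1) ^ m * ∑ i ∈ range (m + 1), (-1) ^ i * f i from fun f => by
    simp only [Nat.add_sub_cancel, pow_add, mul_sum, mul_assoc]]
  linear_combination -(-1 : ℚ[X]) ^ m * h - W (m + 1) * hsign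

end GeneratingFunctions

/-- if `c_0 = 1` and
`c_n = ∑_{i=0}^{n-1} (-1)^{n-1+i} c_i ∏_{j=1}^{n-i} 1/(1-q^j)^2` for `n ≥ 1`, then
`c_n = W_n(q) / ∏_{k=1}^n (1-q^k)^2` in the field `ℚ(q)`. -/
theorem specialization_recursion (c : ℕ → RatFunc ℚ) (h0 : c 0 = 1)
    (hrec : ∀ n : ℕ, 1 ≤ n → c n =
      ∑ i ∈ Finset.range n, (-1 : RatFunc ℚ) ^ (n - 1 + i) * c i *
        ∏ j ∈ Finset.range (n - i), ((1 - RatFunc.X ^ (j + 1)) ^ 2)⁻¹) :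
    ∀ n : ℕ, c n =
      algebraMap (Polynomial ℚ) (RatFunc ℚ) (W n) /
        ∏ k ∈ Finset.range n, (1 - RatFunc.X ^ (k + 1)) ^ 2 := by
  set φ := algebraMap ℚ[X] (RatFunc ℚ)
  have hP : ∀ m, ∏ k ∈ range m, (1 - RatFunc.X ^ (k + 1)) ^ 2 = φ (qPochhammer ℚ m) ^ 2 :=
    fun m => by simp [φ, qPochhammer, prod_pow]
  have hP0 : ∀ m, φ (qPochhammer ℚ m) ≠ 0 := fun m =>
    (map_ne_zero_iff _ (IsFractionRing.injective _ _)).2 (qPochhammer_ne_zero m)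
  suffices key : ∀ n, c n * φ (qPochhammer ℚ n) ^ 2 = φ (W n) by
    intro n
    rw [hP, ← key, mul_div_cancel_right₀ _ (pow_ne_zero 2 (hP0 n))]
  intro n
  induction n using Nat.strong_induction_on with
  | _ n ih =>
  rcases n.eq_zero_or_pos with rfl | hn
  · simp [h0, W_zero]
  rw [hrec n hn, sum_mul, W_eq_sum_qBinomial_sq_mul_W hn, map_sum]
  refine sum_congr rfl fun i hi => ?_
  have hin := mem_range.1 hi
  have hsplit := qBinomial_mul_qPochhammer (R := ℚ) (univ : Finset (Fin n)) (k := i) (by simp; omega)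
  rw [card_fin] at hsplit
  simp only [map_mul, map_pow, map_neg, map_one]
  rw [← ih i hin, prod_inv_distrib, hP, ← hsplit, map_mul, map_mul]
  field_simp [hP0 (n - i)]
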